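/- Generalized symmetric extensions of maximally symmetric operators are of kind II. Let A be a densely defined closed symmetric operator on a complex Hilbert space H which is maximally symmetric. Let K be a complex Hilbert space, J : H → K a linear isometry, and B a densely defined symmetric operator on K such that Jx belongs to the domain of B and B(Jx) = J(Ax) for every x in the domain of A, and assume that every closed subspace of K orthogonal to the range of J that reduces B is the zero subspace. Then the domain of A equals {x ∈ H : Jx belongs to the domain of B}. -/

import Mathlib

/-- The orthogonal projection of `K` onto a closed subspace `K₀`, as an operator `K →L[ℂ] K`. -/
noncomputable def projOf {K : Type*} [NormedAddCommGroup K] [InnerProductSpace ℂ K]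
    [CompleteSpace K] (K₀ : Submodule ℂ K) (hc : IsClosed (K₀ : Set K)) : K →L[ℂ] K :=
  haveI : CompleteSpace K₀ := hc.completeSpace_coe
  K₀.subtypeL.comp (K₀.orthogonalProjectionOnto)

/-- A closed subspace `K₀` (with projector `P₀`) reduces the operator `B` if `P₀` maps the
domain of `B` into itself and `B P₀ x = P₀ B x` for all `x` in the domain of `B`. -/
def ReducesPMap {K : Type*} [NormedAddCommGroup K] [InnerProductSpace ℂ K] [CompleteSpace K]
    (B : K →ₗ.[ℂ] K) (K₀ : Submodule ℂ K) (hc : IsClosed (K₀ : Set K)) : Prop :=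
  (∀ x : B.domain, projOf K₀ hc (x : K) ∈ B.domain) ∧
  ∀ (x : B.domain) (h : projOf K₀ hc (x : K) ∈ B.domain),
    B ⟨projOf K₀ hc (x : K), h⟩ = projOf K₀ hc (B x)

/-- A (partially defined) operator is symmetric if `⟪Bx, y⟫ = ⟪x, By⟫` on its domain. -/
def IsSymmetricPMap {K : Type*} [NormedAddCommGroup K] [InnerProductSpace ℂ K]
    (B : K →ₗ.[ℂ] K) : Prop :=
  ∀ x y : B.domain, (inner ℂ (B x) ((y : K)) : ℂ) = inner ℂ ((x : K)) (B y)

/-- A densely defined symmetric operator is maximally symmetric if it is closed and admits no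
proper densely defined symmetric extension on the same Hilbert space. -/
def MaxSymmetric {H : Type*} [NormedAddCommGroup H] [InnerProductSpace ℂ H]
    (T : H →ₗ.[ℂ] H) : Prop :=
  Dense (T.domain : Set H) ∧ IsSymmetricPMap T ∧ T.IsClosed ∧
  ∀ S : H →ₗ.[ℂ] H, Dense (S.domain : Set H) → IsSymmetricPMap S → T ≤ S → S = T

/-!
The compression `J* B J` of `B` to `H`, defined on `{x | J x ∈ dom B}` by projecting `B (J x)`
orthogonally onto the (complete, hence closed) range of `J`, inherits symmetry from `B` and
extends `A` because `B (J x) = J (A x)` already lies in the range. Maximality of `A` forces the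
compression to equal `A`, so their domains agree.
-/

open scoped InnerProductSpace

namespace LinearIsometry

variable {𝕜 E F : Type*} [RCLike 𝕜] [NormedAddCommGroup E] [InnerProductSpace 𝕜 E]
  [NormedAddCommGroup F] [InnerProductSpace 𝕜 F] [CompleteSpace E]

instance completeSpace_range (J : E →ₗᵢ[𝕜] F) :
    CompleteSpace (LinearMap.range J.toLinearMap) :=
  (J.equivRange.toIsometryEquiv.completeSpace_iff).1 inferInstance

noncomputable def compression (J : E →ₗᵢ[𝕜] F) (B : F →ₗ.[𝕜] F) : E →ₗ.[𝕜] E where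
  domain := B.domain.comap J.toLinearMap
  toFun := J.equivRange.symm.toLinearMap ∘ₗ
    (LinearMap.range J.toLinearMap).orthogonalProjectionOnto.toLinearMap ∘ₗ
    B.toFun ∘ₗ J.toLinearMap.restrict fun _ hx => hx

variable (J : E →ₗᵢ[𝕜] F) (B : F →ₗ.[𝕜] F)

@[simp]
theorem mem_compression_domain {x : E} : x ∈ (J.compression B).domain ↔ J x ∈ B.domain :=
  Iff.rfl

theorem starProjection_range_apply (y : E) :
    (LinearMap.range J.toLinearMap).starProjection (J y) = J y :=
  Submodule.starProjection_eq_self_iff.2 (LinearMap.mem_range_self J.toLinearMap y)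

theorem apply_compression_apply (x : (J.compression B).domain) :
    J (J.compression B x) = (LinearMap.range J.toLinearMap).starProjection
      (B ⟨J x, (J.mem_compression_domain B).1 x.2⟩) := by
  rw [← J.equivRange_apply_coe]
  exact congrArg Subtype.val (J.equivRange.apply_symm_apply _)

theorem inner_compression_apply_left (x : (J.compression B).domain) (y : E) :
    ⟪J.compression B x, y⟫_𝕜 = ⟪B ⟨J x, (J.mem_compression_domain B).1 x.2⟩, J y⟫_𝕜 := by
  rw [← J.inner_map_map, apply_compression_apply, Submodule.inner_starProjection_left_eq_right,
    starProjection_range_apply]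

theorem compression_apply_eq_of_apply_eq {x : (J.compression B).domain} {z : E}
    (h : B ⟨J x, (J.mem_compression_domain B).1 x.2⟩ = J z) : J.compression B x = z :=
  J.injective <| by
    rw [apply_compression_apply, h, starProjection_range_apply]

end LinearIsometry

section

variable {H K : Type*} [NormedAddCommGroup H] [InnerProductSpace ℂ H] [CompleteSpace H]
  [NormedAddCommGroup K] [InnerProductSpace ℂ K]

theorem IsSymmetricPMap.compression {B : K →ₗ.[ℂ] K} (hB : IsSymmetricPMap B)
    (J : H →ₗᵢ[ℂ] K) : IsSymmetricPMap (J.compression B) := fun x y => by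
  rw [J.inner_compression_apply_left, hB _ ⟨J y, (J.mem_compression_domain B).1 y.2⟩,
    ← inner_conj_symm (x : H), J.inner_compression_apply_left, inner_conj_symm]

theorem le_compression {A : H →ₗ.[ℂ] H} {J : H →ₗᵢ[ℂ] K} {B : K →ₗ.[ℂ] K}
    (hmem : ∀ x : A.domain, J (x : H) ∈ B.domain)
    (hext : ∀ (x : A.domain) (h : J (x : H) ∈ B.domain), B ⟨J (x : H), h⟩ = J (A x)) :
    A ≤ J.compression B :=
  ⟨fun x hx => hmem ⟨x, hx⟩, fun x y hxy => by
    refine (J.compression_apply_eq_of_apply_eq B ?_).symm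
    simpa only [← hxy] using hext x _⟩

end

theorem MaxSymmetric.eq_of_le {H : Type*} [NormedAddCommGroup H] [InnerProductSpace ℂ H]
    {A S : H →ₗ.[ℂ] H} (hA : MaxSymmetric A) (hS : IsSymmetricPMap S) (hAS : A ≤ S) : S = A :=
  hA.2.2.2 S (hA.1.mono hAS.1) hS hAS

theorem maxSymmetric_generalized_extension_kind_II_general
    {H K : Type*} [NormedAddCommGroup H] [InnerProductSpace ℂ H] [CompleteSpace H]
    [NormedAddCommGroup K] [InnerProductSpace ℂ K]
    (A : H →ₗ.[ℂ] H) (hA : MaxSymmetric A)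
    (J : H →ₗᵢ[ℂ] K) (B : K →ₗ.[ℂ] K)
    (hBsymm : IsSymmetricPMap B)
    (hmem : ∀ x : A.domain, J (x : H) ∈ B.domain)
    (hext : ∀ (x : A.domain) (h : J (x : H) ∈ B.domain), B ⟨J (x : H), h⟩ = J (A x)) :
    (A.domain : Set H) = {x : H | J x ∈ B.domain} := by
  have hcompression : J.compression B = A :=
    hA.eq_of_le (hBsymm.compression J) (le_compression hmem hext)
  rw [← hcompression]
  rfl

/-- **Generalized symmetric extensions of maximally symmetric operators are of kind II.**
If `A` is maximally symmetric on `H` and `B` is a generalized symmetric extension of `A`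
through a linear isometry `J : H → K` such that no nonzero closed subspace of `K` orthogonal
to the range of `J` reduces `B`, then the domain of `A` is exactly the set of `x ∈ H` with
`J x` in the domain of `B`. -/
theorem maxSymmetric_generalized_extension_kind_II
    {H K : Type*} [NormedAddCommGroup H] [InnerProductSpace ℂ H] [CompleteSpace H]
    [NormedAddCommGroup K] [InnerProductSpace ℂ K] [CompleteSpace K]
    (A : H →ₗ.[ℂ] H) (hA : MaxSymmetric A)
    (J : H →ₗᵢ[ℂ] K) (B : K →ₗ.[ℂ] K)
    (hBsymm : IsSymmetricPMap B) (hBdense : Dense (B.domain : Set K))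
    (hmem : ∀ x : A.domain, J (x : H) ∈ B.domain)
    (hext : ∀ (x : A.domain) (h : J (x : H) ∈ B.domain), B ⟨J (x : H), h⟩ = J (A x))
    (hred : ∀ (K₀ : Submodule ℂ K) (hc : IsClosed (K₀ : Set K)),
      K₀ ≤ (LinearMap.range J.toLinearMap)ᗮ → ReducesPMap B K₀ hc → K₀ = ⊥) :
    (A.domain : Set H) = {x : H | J x ∈ B.domain} :=
  maxSymmetric_generalized_extension_kind_II_general A hA J B hBsymm hmem hext
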